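/- For m ≥ 2 and the star T^+_{m,1} with center r, stem r', and leaves r_1, …, r_m: if S is a Type II set, then S = {r_1, …, r_m} \ {r_i} for some i, and the unobserved vertices of the attempted power domination by S are exactly {r', r_i}; that is, P^∞(S) = V \ {r', r_i}. -/

import Mathlib

/-- The power domination propagation sequence: `pIter G S 0 = N[S]` and
`pIter G S (k+1)` adds every vertex that is the unique unobserved neighbor
of some observed vertex. -/
def pIter {V : Type*} (G : SimpleGraph V) (S : Set V) : ℕ → Set V
  | 0 => {v | v ∈ S ∨ ∃ s ∈ S, G.Adj s v}
  | k + 1 => pIter G S k ∪ {x | ∃ v ∈ pIter G S k, G.neighborSet v \ pIter G S k = {x}}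

/-- The stable limit `P^∞(S)` of the power domination process. -/
def pInf {V : Type*} (G : SimpleGraph V) (S : Set V) : Set V := ⋃ k, pIter G S k

/-- `S` is a power dominating set for `G` if `P^∞(S) = V`. -/
def PowerDominates {V : Type*} (G : SimpleGraph V) (S : Set V) : Prop :=
  pInf G S = Set.univ

/-- The star `T⁺_{m,1}`: center `r = none` adjacent to the stem
`r' = some none` and to the leaves `r_i = some (some i)` for `i : Fin m`. -/
def starG (m : ℕ) : SimpleGraph (Option (Option (Fin m))) :=
  SimpleGraph.fromRel (fun a _ => a = none)

/-!
Call `F` a fort if no vertex outside `F` has exactly one neighbour in `F`. A fort disjoint from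
`N[S]` is never entered by the propagation, so it stays unobserved. In the star, once the center
`r` is excluded from `F`, every `F` with at least two elements is a fort. Hence a Type II set
avoids `r` (otherwise it already dominates), misses some leaf `r_i` (otherwise `r` forces `r'`),
and misses no other leaf (otherwise `{r_i, r_j}` is a fort for `S ∪ {r'}`). For the remaining set
`{r_j | j ≠ i}`, which needs `m ≥ 2` to observe `r`, the fort `{r', r_i}` is exactly what stays
unobserved.
-/

section PowerDomination

variable {V : Type*} {G : SimpleGraph V} {S F : Set V}

def IsFort (G : SimpleGraph V) (F : Set V) : Prop :=
  ∀ v ∉ F, ∀ x, G.neighborSet v ∩ F ≠ {x}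

lemma subset_pIter_zero : S ⊆ pIter G S 0 := fun _ hv => Or.inl hv

lemma mem_pIter_zero_of_adj {s v : V} (hs : s ∈ S) (h : G.Adj s v) : v ∈ pIter G S 0 :=
  Or.inr ⟨s, hs, h⟩

lemma pIter_subset_succ (k : ℕ) : pIter G S k ⊆ pIter G S (k + 1) := Set.subset_union_left

lemma pIter_subset_pInf (k : ℕ) : pIter G S k ⊆ pInf G S := Set.subset_iUnion (pIter G S) k

lemma powerDominates_of_pIter_eq_univ {k : ℕ} (h : pIter G S k = Set.univ) :
    PowerDominates G S :=
  Set.eq_univ_of_univ_subset (h ▸ pIter_subset_pInf k)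

lemma mem_pIter_succ_of_forces {k : ℕ} {v x : V} (hv : v ∈ pIter G S k) (hvx : G.Adj v x)
    (h : G.neighborSet v \ pIter G S k ⊆ {x}) : x ∈ pIter G S (k + 1) := by
  by_cases hx : x ∈ pIter G S k
  · exact pIter_subset_succ k hx
  · exact Or.inr ⟨v, hv, h.antisymm (Set.singleton_subset_iff.mpr ⟨hvx, hx⟩)⟩

lemma disjoint_pIter_of_isFort (hF : IsFort G F) (h0 : Disjoint (pIter G S 0) F) :
    ∀ k, Disjoint (pIter G S k) F
  | 0 => h0
  | k + 1 => by
    have hk := disjoint_pIter_of_isFort hF h0 k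
    refine Set.disjoint_union_left.mpr ⟨hk, Set.disjoint_left.mpr ?_⟩
    rintro x ⟨v, hv, hvx⟩ hxF
    have hx : x ∈ G.neighborSet v \ pIter G S k := hvx ▸ Set.mem_singleton x
    have hsub : G.neighborSet v ∩ F ⊆ {x} := fun y ⟨hy, hyF⟩ =>
      hvx ▸ ⟨hy, fun hyk => Set.disjoint_left.mp hk hyk hyF⟩
    exact hF v (Set.disjoint_left.mp hk hv) x
      (hsub.antisymm (Set.singleton_subset_iff.mpr ⟨hx.1, hxF⟩))

lemma disjoint_pInf_of_isFort (hF : IsFort G F) (h0 : Disjoint (pIter G S 0) F) :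
    Disjoint (pInf G S) F :=
  Set.disjoint_iUnion_left.mpr (disjoint_pIter_of_isFort hF h0)

end PowerDomination

lemma pair_ne_singleton {α : Type*} {a b : α} (hab : a ≠ b) (x : α) :
    ({a, b} : Set α) ≠ {x} := by
  intro h
  have ha : a ∈ ({x} : Set α) := h ▸ Set.mem_insert a {b}
  have hb : b ∈ ({x} : Set α) := h ▸ Set.mem_insert_of_mem a rfl
  exact hab (ha.trans hb.symm)

section Star

variable {m : ℕ} {S F : Set (Option (Option (Fin m)))}

lemma starG_adj {a b : Option (Option (Fin m))} :
    (starG m).Adj a b ↔ a ≠ b ∧ (a = none ∨ b = none) := by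
  simp [starG, SimpleGraph.fromRel_adj]

lemma isFort_starG (hF : none ∉ F) (h : ∀ x, F ≠ {x}) : IsFort (starG m) F := by
  rintro (_ | w) - x
  · convert h x using 1
    ext y
    simp only [Set.mem_inter_iff, SimpleGraph.mem_neighborSet, starG_adj, true_or, and_true,
      and_iff_right_iff_imp]
    exact fun hy hy' => hF (hy' ▸ hy)
  · intro heq
    obtain ⟨hadj, hxF⟩ : x ∈ (starG m).neighborSet (some w) ∩ F := heq ▸ rfl
    rcases (starG_adj.mp hadj).2 with h | rfl
    · exact Option.some_ne_none w h
    · exact hF hxF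

lemma disjoint_pIter_zero_starG (hS : none ∉ S) (hF : none ∉ F) (hSF : Disjoint S F) :
    Disjoint (pIter (starG m) S 0) F := by
  refine Set.disjoint_left.mpr ?_
  rintro v (hv | ⟨s, hs, hadj⟩)
  · exact Set.disjoint_left.mp hSF hv
  · rcases (starG_adj.mp hadj).2 with rfl | rfl
    · exact absurd hs hS
    · exact hF

lemma disjoint_pInf_starG (hS : none ∉ S) (hF : none ∉ F) (hSF : Disjoint S F)
    (h : ∀ x, F ≠ {x}) : Disjoint (pInf (starG m) S) F :=
  disjoint_pInf_of_isFort (isFort_starG hF h) (disjoint_pIter_zero_starG hS hF hSF)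

lemma powerDominates_starG_of_center_mem (h : none ∈ S) : PowerDominates (starG m) S := by
  refine powerDominates_of_pIter_eq_univ (k := 0) (Set.eq_univ_of_forall fun v => ?_)
  by_cases hv : v = none
  · exact hv ▸ subset_pIter_zero h
  · exact mem_pIter_zero_of_adj h (starG_adj.mpr ⟨Ne.symm hv, Or.inl rfl⟩)

lemma powerDominates_starG_of_leaves_mem (hm : 0 < m) (h : ∀ i, some (some i) ∈ S) :
    PowerDominates (starG m) S := by
  have hcenter : none ∈ pIter (starG m) S 0 :=
    mem_pIter_zero_of_adj (h ⟨0, hm⟩) (starG_adj.mpr ⟨by simp, Or.inr rfl⟩)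
  refine powerDominates_of_pIter_eq_univ (k := 1) (Set.eq_univ_of_forall ?_)
  rintro (_ | _ | i)
  · exact pIter_subset_succ 0 hcenter
  · refine mem_pIter_succ_of_forces hcenter (starG_adj.mpr ⟨by simp, Or.inl rfl⟩) ?_
    rintro (_ | _ | j) ⟨hadj, hj⟩
    · exact absurd hadj ((starG m).irrefl)
    · rfl
    · exact absurd (subset_pIter_zero (h j)) hj
  · exact pIter_subset_succ 0 (subset_pIter_zero (h i))

lemma not_powerDominates_starG_of_leaves_not_mem {i j : Fin m} (hS : none ∉ S) (hij : i ≠ j)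
    (hi : some (some i) ∉ S) (hj : some (some j) ∉ S) : ¬ PowerDominates (starG m) S := by
  intro hPD
  have hF := disjoint_pInf_starG (F := {some (some i), some (some j)}) hS (by simp)
    (by simp [Set.disjoint_right, hi, hj]) (pair_ne_singleton (by simpa using hij))
  rw [hPD] at hF
  exact Set.disjoint_left.mp hF (Set.mem_univ _) (Set.mem_insert _ _)

lemma pInf_starG_leaves_ne (hm : 2 ≤ m) (i : Fin m) :
    pInf (starG m) {v | ∃ j, j ≠ i ∧ v = some (some j)} = {some none, some (some i)}ᶜ := by
  set S : Set (Option (Option (Fin m))) := {v | ∃ j, j ≠ i ∧ v = some (some j)}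
  refine Set.Subset.antisymm (Set.subset_compl_iff_disjoint_right.mpr ?_) ?_
  · exact disjoint_pInf_starG (by simp [S]) (by simp) (by simp [S, Set.disjoint_right, eq_comm])
      (pair_ne_singleton (by simp))
  · have : Nontrivial (Fin m) := Fin.nontrivial_iff_two_le.mpr hm
    obtain ⟨j, hj⟩ := exists_ne i
    refine subset_trans ?_ (pIter_subset_pInf 0)
    rintro (_ | _ | k) hk
    · exact mem_pIter_zero_of_adj (s := some (some j)) ⟨j, hj, rfl⟩
        (starG_adj.mpr ⟨by simp, Or.inr rfl⟩)
    · simp at hk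
    · exact subset_pIter_zero ⟨k, by simpa using hk, rfl⟩

end Star

/-- For the star T⁺_{m,1} (m ≥ 2): if S ⊆ V \ {r'} is Type II, then
S = {r_1, …, r_m} \ {r_i} for some i, and
P^∞(S) = V \ {r', r_i}. -/
theorem stmt15 (m : ℕ) (hm : 2 ≤ m) (S : Set (Option (Option (Fin m))))
    (hS : some none ∉ S)
    (hII : ¬ PowerDominates (starG m) S ∧ PowerDominates (starG m) (S ∪ {some none})) :
    ∃ i : Fin m,
      S = {v | ∃ j : Fin m, j ≠ i ∧ v = some (some j)} ∧
      pInf (starG m) S = ({some none, some (some i)} : Set (Option (Option (Fin m))))ᶜ := by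
  obtain ⟨hnotPD, hPD⟩ := hII
  have hcenter : none ∉ S := fun h => hnotPD (powerDominates_starG_of_center_mem h)
  obtain ⟨i, hi⟩ : ∃ i : Fin m, some (some i) ∉ S := by
    by_contra! h
    exact hnotPD (powerDominates_starG_of_leaves_mem (by omega) h)
  have hleaves : ∀ j, j ≠ i → some (some j) ∈ S := by
    by_contra! ⟨j, hji, hj⟩
    exact not_powerDominates_starG_of_leaves_not_mem (by simpa using hcenter) hji.symm
      (by simpa using hi) (by simpa using hj) hPD
  have hSeq : S = {v | ∃ j, j ≠ i ∧ v = some (some j)} := by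
    ext (_ | _ | j)
    · simpa using hcenter
    · simpa using hS
    · simpa using ⟨fun hj hji => hi (hji ▸ hj), hleaves j⟩
  subst hSeq
  exact ⟨i, rfl, pInf_starG_leaves_ne hm i⟩
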